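/- Fix an integer N > 1. Let (S₁,…,S_N) be an mKdV tuple of subsets with (S₁,…,S_N) ≠ (ℤ≥0,…,ℤ≥0), and for each i let λ^i be the partition corresponding to S_i. Then there exists an index i ∈ {1,…,N} such that 2|λ^i| > |λ^{i+1}| + |λ^{i−1}| + 1, where the indices are taken modulo N (so λ^0 = λ^N and λ^{N+1} = λ^1). -/

import Mathlib

/-- A subset `S ⊆ ℤ` is of virtual cardinal zero if both `S \ ℤ≥0` and `ℤ≥0 \ S`
are finite and have the same cardinality. -/
def VirtualCardZero (S : Set ℤ) : Prop :=
  (S \ {n : ℤ | 0 ≤ n}).Finite ∧ ({n : ℤ | 0 ≤ n} \ S).Finite ∧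
    (S \ {n : ℤ | 0 ≤ n}).ncard = ({n : ℤ | 0 ≤ n} \ S).ncard

/-- The shift `S + k = {s + k : s ∈ S}` of a set of integers. -/
def shiftSet (S : Set ℤ) (k : ℤ) : Set ℤ := (fun s => s + k) '' S

/-- A KdV subset (for a fixed `N`): a subset `S ⊆ ℤ` of virtual cardinal zero
such that `S + N ⊆ S`. -/
def IsKdV (N : ℕ) (S : Set ℤ) : Prop :=
  VirtualCardZero S ∧ shiftSet S N ⊆ S

/-- `A` is the leading term of the KdV subset `S`: `A` is an `N`-element set with
`S = A ∪ (S+N)` and `A ∩ (S+N) = ∅`. -/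
def IsLeadingTerm (N : ℕ) (S : Set ℤ) (A : Finset ℤ) : Prop :=
  A.card = N ∧ (↑A : Set ℤ) ∪ shiftSet S N = S ∧ (↑A : Set ℤ) ∩ shiftSet S N = ∅

/-- The mutation `S[a] = {a+1−N} ∪ (S+1)` of a KdV subset `S` at an element `a`
of its leading term. -/
def mutate (N : ℕ) (S : Set ℤ) (a : ℤ) : Set ℤ :=
  {a + 1 - (N : ℤ)} ∪ shiftSet S 1

/-- An mKdV tuple of subsets: an `N`-tuple `(S₁,…,S_N)` of KdV subsets with
`S_i + 1 ⊆ S_{i+1}` for `i = 1,…,N−1` and `S_N + 1 ⊆ S₁` (i.e. cyclically). -/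
def IsMKdVTuple (N : ℕ) [NeZero N] (T : Fin N → Set ℤ) : Prop :=
  (∀ i, IsKdV N (T i)) ∧ ∀ i : Fin N, shiftSet (T i) 1 ⊆ T (i + 1)

/-- The increasing enumeration `s₀ < s₁ < s₂ < …` of a set `S ⊆ ℤ`, when it exists
(it exists and is unique for any set of virtual cardinal zero); junk value otherwise. -/
noncomputable def enumOf (S : Set ℤ) : ℕ → ℤ :=
  letI := Classical.propDecidable (∃ f : ℕ → ℤ, StrictMono f ∧ Set.range f = S)
  if h : ∃ f : ℕ → ℤ, StrictMono f ∧ Set.range f = S then h.choose else fun _ => 0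

/-- The weight `|λ| = ∑_i λ_i` of the partition `λ_i = i − s_i` associated to a subset
`S = {s₀ < s₁ < …} ⊆ ℤ` of virtual cardinal zero. -/
noncomputable def vczWeight (S : Set ℤ) : ℤ :=
  ∑ᶠ i : ℕ, ((i : ℤ) - enumOf S i)

/-! Let `s₀ < s₁ < ⋯` enumerate a set `S` of virtual cardinal zero. Then `s_n = n` from some `M`
on, so `|λ| = ∑_{n<M} (n - s_n)`. Since `S_i + 1 ⊆ S_{i+1}` and both have virtual cardinal zero,
`S_{i+1}` is `S_i + 1` plus one element `b_i`, and `|λ^{i+1}| = |λ^i| - b_i`; hence the `b_i` sum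
to zero. If the inequality failed at every index, then `b_{i+1} ≤ b_i + 1`; as
`b_i + 1 ∈ S_{i+1} + 1` while `b_{i+1} ∉ S_{i+1} + 1`, in fact `b_{i+1} ≤ b_i`, so cyclically all
`b_i` are equal, hence zero. Thus `-1 ∉ S_i` for every `i`. A negative element of some `S_i`,
moved up by steps of `+1` through the tuple, would reach `-1`; so every `S_i ⊆ ℤ≥0`, and virtual
cardinal zero forces `S_i = ℤ≥0`. -/

structure IsStableEnum (S : Set ℤ) (f : ℕ → ℤ) (M : ℕ) : Prop where
  strictMono : StrictMono f
  range_eq : Set.range f = S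
  eq_self : ∀ n, M ≤ n → f n = n

namespace IsStableEnum

variable {S : Set ℤ} {f : ℕ → ℤ} {M : ℕ}

theorem mono (h : IsStableEnum S f M) {M' : ℕ} (hM : M ≤ M') : IsStableEnum S f M' :=
  ⟨h.strictMono, h.range_eq, fun n hn => h.eq_self n (hM.trans hn)⟩

theorem lt_iff (h : IsStableEnum S f M) {n : ℕ} : f n < M ↔ n < M := by
  conv_lhs => rw [← h.eq_self M le_rfl]
  exact h.strictMono.lt_iff_lt

theorem enumOf_eq (h : IsStableEnum S f M) : enumOf S = f := by
  have hex : ∃ g : ℕ → ℤ, StrictMono g ∧ Set.range g = S := ⟨f, h.strictMono, h.range_eq⟩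
  rw [enumOf, dif_pos hex]
  exact (hex.choose_spec.1.range_inj h.strictMono).1 (hex.choose_spec.2.trans h.range_eq.symm)

theorem vczWeight_eq (h : IsStableEnum S f M) :
    vczWeight S = ∑ n ∈ Finset.range M, ((n : ℤ) - f n) := by
  rw [vczWeight, h.enumOf_eq]
  refine finsum_eq_sum_of_support_subset _ fun n hn => ?_
  by_contra hnM
  simp only [Finset.coe_range, Set.mem_Iio, not_lt] at hnM
  simp [h.eq_self n hnM] at hn

end IsStableEnum

theorem exists_isStableEnum_of_inter_Iio {S : Set ℤ} {M : ℕ} (F : Finset ℤ)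
    (hF : (F : Set ℤ) = S ∩ Set.Iio (M : ℤ)) (hcard : F.card = M) (hIci : Set.Ici (M : ℤ) ⊆ S) :
    ∃ f, IsStableEnum S f M := by
  have hFlt : ∀ x ∈ F, x < M := fun x hx => (Set.ext_iff.1 hF x).1 hx |>.2
  let e := F.orderEmbOfFin hcard
  refine ⟨fun n => if h : n < M then e ⟨n, h⟩ else n, ?_, ?_, fun n hn => dif_neg hn.not_gt⟩
  · intro a b hab
    by_cases hb : b < M
    · simpa [hab.trans hb, hb] using
        e.strictMono (show (⟨a, hab.trans hb⟩ : Fin M) < ⟨b, hb⟩ from hab)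
    · by_cases ha : a < M
      · have hbM : (M : ℤ) ≤ b := by exact_mod_cast not_lt.1 hb
        simpa [ha, hb] using (hFlt _ (F.orderEmbOfFin_mem hcard _)).trans_le hbM
      · simpa [ha, hb] using hab
  · ext x
    constructor
    · rintro ⟨n, rfl⟩
      by_cases hn : n < M
      · have hmem : e ⟨n, hn⟩ ∈ (F : Set ℤ) := F.orderEmbOfFin_mem hcard _
        rw [hF] at hmem
        simpa [hn] using hmem.1
      · simpa [hn] using hIci (show (M : ℤ) ≤ n by exact_mod_cast not_lt.1 hn)
    · intro hx
      by_cases hxM : x < M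
      · obtain ⟨⟨n, hn⟩, hnx⟩ : x ∈ Set.range e := by
          rw [F.range_orderEmbOfFin, hF]; exact ⟨hx, hxM⟩
        exact ⟨n, by simpa [hn] using hnx⟩
      · exact ⟨x.toNat, by simp only [dif_neg (show ¬ x.toNat < M by omega)]; omega⟩

theorem VirtualCardZero.exists_isStableEnum {S : Set ℤ} (hS : VirtualCardZero S) :
    ∃ f M, IsStableEnum S f M := by
  obtain ⟨hneg, hgap, hcard⟩ := hS
  obtain ⟨B, hB⟩ := hgap.bddAbove
  set M := (B + 1).toNat
  have hgapM : {n : ℤ | 0 ≤ n} \ S ⊆ Set.Ico 0 (M : ℤ) :=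
    fun x hx => ⟨hx.1, by have := hB hx; omega⟩
  have hIci : Set.Ici (M : ℤ) ⊆ S := fun x hx => by
    by_contra hxS
    have := (hgapM ⟨(Int.natCast_nonneg M).trans hx, hxS⟩).2
    exact this.not_ge hx
  have hsplit : S ∩ Set.Iio (M : ℤ) = (S \ {n : ℤ | 0 ≤ n}) ∪ (S ∩ Set.Ico 0 (M : ℤ)) := by
    ext x
    simp only [Set.mem_inter_iff, Set.mem_Iio, Set.mem_union, Set.mem_sdiff, Set.mem_ofPred_eq,
      Set.mem_Ico]
    constructor
    · rintro ⟨hxS, hxM⟩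
      by_cases hx0 : 0 ≤ x
      · exact Or.inr ⟨hxS, hx0, hxM⟩
      · exact Or.inl ⟨hxS, hx0⟩
    · rintro (⟨hxS, hx0⟩ | ⟨hxS, -, hxM⟩)
      · exact ⟨hxS, by omega⟩
      · exact ⟨hxS, hxM⟩
  have hIco : Set.Ico 0 (M : ℤ) = (S ∩ Set.Ico 0 (M : ℤ)) ∪ ({n : ℤ | 0 ≤ n} \ S) := by
    ext x; constructor
    · intro hx; by_cases hxS : x ∈ S
      · exact Or.inl ⟨hxS, hx⟩
      · exact Or.inr ⟨hx.1, hxS⟩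
    · rintro (hx | hx)
      · exact hx.2
      · exact hgapM hx
  have hfinIco : (S ∩ Set.Ico 0 (M : ℤ)).Finite := (Set.finite_Ico _ _).inter_of_right _
  have hfin : (S ∩ Set.Iio (M : ℤ)).Finite := hsplit ▸ hneg.union hfinIco
  have hcardM : (S ∩ Set.Iio (M : ℤ)).ncard = M := by
    rw [hsplit, Set.ncard_union_eq (by grind) hneg hfinIco, hcard, add_comm,
      ← Set.ncard_union_eq (by grind) hfinIco hgap, ← hIco, ← Finset.coe_Ico,
      Set.ncard_coe_finset, Int.card_Ico]
    simp
  obtain ⟨f, hf⟩ := exists_isStableEnum_of_inter_Iio hfin.toFinset (by simp)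
    (by rw [← Set.ncard_eq_toFinset_card _ hfin, hcardM]) hIci
  exact ⟨f, M, hf⟩

theorem VirtualCardZero.exists_mem_vczWeight_eq_sub {S S' : Set ℤ} (hS : VirtualCardZero S)
    (hS' : VirtualCardZero S') (hsub : shiftSet S 1 ⊆ S') :
    ∃ b ∈ S', b ∉ shiftSet S 1 ∧ vczWeight S' = vczWeight S - b := by
  classical
  obtain ⟨f, M₁, hf⟩ := hS.exists_isStableEnum
  obtain ⟨g, M₂, hg⟩ := hS'.exists_isStableEnum
  obtain ⟨M, hM₁, hM₂⟩ : ∃ M, M₁ ≤ M ∧ M₂ ≤ M := ⟨max M₁ M₂, le_max_left _ _, le_max_right _ _⟩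
  replace hf := hf.mono hM₁
  replace hg := hg.mono (by omega : M₂ ≤ M + 1)
  have hf_inj : Function.Injective (f · + 1) := fun a b h =>
    hf.strictMono.injective (by simpa using h)
  -- `A` and `B` list the elements of `S + 1` and of `S'` below `M + 1`; they differ by one element.
  set A := (Finset.range M).image (f · + 1)
  set B := (Finset.range (M + 1)).image g
  have hAB : A ⊆ B := by
    simp only [A, B, Finset.image_subset_iff, Finset.mem_range, Finset.mem_image]
    intro n hn
    obtain ⟨m, hm⟩ : f n + 1 ∈ Set.range g :=
      hg.range_eq ▸ hsub ⟨f n, hf.range_eq ▸ ⟨n, rfl⟩, rfl⟩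
    refine ⟨m, hg.lt_iff.1 ?_, hm⟩
    have := hf.lt_iff.2 hn
    push_cast
    omega
  have hcardA : A.card = M := by rw [Finset.card_image_of_injective _ hf_inj, Finset.card_range]
  have hcardB : B.card = M + 1 := by
    rw [Finset.card_image_of_injective _ hg.strictMono.injective, Finset.card_range]
  obtain ⟨b, hbA, hB⟩ := Finset.exists_eq_insert_iff.2 ⟨hAB, by omega⟩
  obtain ⟨m, hm, rfl⟩ := Finset.mem_image.1 (hB ▸ Finset.mem_insert_self b A)
  refine ⟨g m, hg.range_eq ▸ ⟨m, rfl⟩, ?_, ?_⟩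
  · rintro ⟨x, hx, hxb⟩
    rw [← hf.range_eq] at hx
    obtain ⟨n, rfl⟩ := hx
    have := hg.lt_iff.2 (Finset.mem_range.1 hm)
    refine hbA (Finset.mem_image.2 ⟨n, Finset.mem_range.2 (hf.lt_iff.1 ?_), hxb⟩)
    push_cast at this
    beta_reduce at hxb
    omega
  · have hsumB : ∑ n ∈ Finset.range (M + 1), g n = g m + ∑ n ∈ Finset.range M, (f n + 1) := by
      have hB_sum : ∑ x ∈ B, x = ∑ n ∈ Finset.range (M + 1), g n :=
        Finset.sum_image hg.strictMono.injective.injOn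
      have hA_sum : ∑ x ∈ A, x = ∑ n ∈ Finset.range M, (f n + 1) :=
        Finset.sum_image hf_inj.injOn
      rw [← hB_sum, ← hA_sum, ← hB, Finset.sum_insert hbA]
    rw [hg.vczWeight_eq, hf.vczWeight_eq, Finset.sum_sub_distrib, Finset.sum_sub_distrib, hsumB,
      Finset.sum_range_succ, Finset.sum_add_distrib]
    simp only [Finset.sum_const, Finset.card_range, Int.nsmul_eq_mul, mul_one]
    ring

theorem VirtualCardZero.eq_of_subset {S : Set ℤ} (hS : VirtualCardZero S)
    (h : S ⊆ {n : ℤ | 0 ≤ n}) : S = {n : ℤ | 0 ≤ n} := by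
  obtain ⟨-, hgap, hcard⟩ := hS
  rw [Set.sdiff_eq_empty.2 h, Set.ncard_empty, eq_comm, Set.ncard_eq_zero hgap,
    Set.sdiff_eq_empty] at hcard
  exact h.antisymm hcard

section Cyclic

variable {ι : Type*} {next : ι → ι} {T : ι → Set ℤ}

theorem exists_add_mem_of_shiftSet_subset (hT : ∀ i, shiftSet (T i) 1 ⊆ T (next i)) {i : ι}
    {x : ℤ} (hx : x ∈ T i) (k : ℕ) : ∃ j, x + k ∈ T j := by
  induction k with
  | zero => exact ⟨i, by simpa using hx⟩
  | succ k ih =>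
    obtain ⟨j, hj⟩ := ih
    exact ⟨next j, hT j ⟨x + k, hj, by push_cast; ring⟩⟩

theorem subset_nonneg_of_forall_neg_one_notMem (hT : ∀ i, shiftSet (T i) 1 ⊆ T (next i))
    (h : ∀ i, -1 ∉ T i) (i : ι) : T i ⊆ {n : ℤ | 0 ≤ n} := by
  intro x hx
  by_contra hneg
  obtain ⟨j, hj⟩ := exists_add_mem_of_shiftSet_subset hT hx (-1 - x).toNat
  simp only [Set.mem_ofPred_eq, not_le] at hneg
  rw [show x + ((-1 - x).toNat : ℤ) = -1 by omega] at hj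
  exact h j hj

end Cyclic

section FinCyclic

variable {N : ℕ} [NeZero N] {α : Type*}

theorem Fin.sum_sub_apply_add_one_eq_zero [AddCommGroup α] (f : Fin N → α) :
    ∑ i, (f i - f (i + 1)) = 0 := by
  rw [Finset.sum_sub_distrib, sub_eq_zero]
  exact (Equiv.sum_comp (Equiv.addRight 1) f).symm

theorem Fin.apply_eq_apply_zero_of_forall_apply_add_one_le [AddCommGroup α] [PartialOrder α]
    [IsOrderedAddMonoid α] {f : Fin N → α} (h : ∀ i, f (i + 1) ≤ f i) (i : Fin N) :
    f i = f 0 := by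
  have hstep : ∀ i, f (i + 1) = f i := by
    have hzero := (Finset.sum_eq_zero_iff_of_nonneg fun i _ => sub_nonneg.2 (h i)).1
      (Fin.sum_sub_apply_add_one_eq_zero f)
    exact fun i => (sub_eq_zero.1 (hzero i (Finset.mem_univ i))).symm
  obtain ⟨n, rfl⟩ := Nat.exists_eq_succ_of_ne_zero (NeZero.ne N)
  induction i using Fin.induction with
  | zero => rfl
  | succ i ih => rw [← Fin.coeSucc_eq_succ, hstep, ih]

end FinCyclic

theorem mkdv_exists_degree_decreasing_index_general (N : ℕ) [NeZero N]
    (T : Fin N → Set ℤ) (hT : IsMKdVTuple N T)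
    (hne : T ≠ fun _ => {n : ℤ | 0 ≤ n}) :
    ∃ i : Fin N,
      2 * vczWeight (T i) > vczWeight (T (i + 1)) + vczWeight (T (i - 1)) + 1 := by
  by_contra! hcon
  have hvcz i : VirtualCardZero (T i) := (hT.1 i).1
  choose b hbT hbS hw using fun i =>
    (hvcz i).exists_mem_vczWeight_eq_sub (hvcz (i + 1)) (hT.2 i)
  have hanti : ∀ i, b (i + 1) ≤ b i := by
    intro i
    have hle := hcon (i + 1)
    rw [add_sub_cancel_right, hw (i + 1), hw i] at hle
    have hnext : b (i + 1) ≠ b i + 1 := fun h => hbS (i + 1) ⟨b i, hbT i, h.symm⟩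
    omega
  have hsum : ∑ i, b i = 0 := by
    simpa [hw] using Fin.sum_sub_apply_add_one_eq_zero fun i => vczWeight (T i)
  have hb0 i : b i = 0 := by
    have hconst := Fin.apply_eq_apply_zero_of_forall_apply_add_one_le hanti
    rw [Finset.sum_congr rfl fun j _ => hconst j] at hsum
    simpa [hconst i, NeZero.ne N] using hsum
  refine hne (funext fun i => (hvcz i).eq_of_subset ?_)
  exact subset_nonneg_of_forall_neg_one_notMem hT.2
    (fun j hj => hbS j ⟨-1, hj, by simp [hb0]⟩) i

/-- Fix `N > 1`.  Let `(S₁,…,S_N)` be an mKdV tuple of subsets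
different from `(ℤ≥0,…,ℤ≥0)`, and let `λ^i` be the partition corresponding to `S_i`.
Then there is an index `i` (indices modulo `N`) with
`2|λ^i| > |λ^{i+1}| + |λ^{i−1}| + 1`. -/
theorem mkdv_exists_degree_decreasing_index (N : ℕ) [NeZero N] (hN : 1 < N)
    (T : Fin N → Set ℤ) (hT : IsMKdVTuple N T)
    (hne : T ≠ fun _ => {n : ℤ | 0 ≤ n}) :
    ∃ i : Fin N,
      2 * vczWeight (T i) > vczWeight (T (i + 1)) + vczWeight (T (i - 1)) + 1 :=
  mkdv_exists_degree_decreasing_index_general N T hT hne
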